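/- arXiv:2011.06824 — 2 statements merged into one kernel-verified Lean document; each statement's English description precedes it below -/
import Mathlib

section
/- Let U be a Banach space and K ∈ L(U) a bounded linear operator such that K² is a compact operator. Then I − K is a Fredholm operator of index zero. -/
open Metric Set Filter Topology Pointwise

namespace Nik

section
variable {X : Type*} [NormedAddCommGroup X] [NormedSpace ℝ X]
/-- A compact operator maps the unit ball into a fixed compact set. -/
lemma exists_compact_superset {C : X →L[ℝ] X} (hC : IsCompactOperator ⇑C) :
    ∃ K₀ : Set X, IsCompact K₀ ∧ ∀ x : X, ‖x‖ ≤ 1 → C x ∈ K₀ := by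
  obtain ⟨K₀, hK₀, hmem⟩ := hC
  obtain ⟨ε, hε, hball⟩ := Metric.mem_nhds_iff.1 hmem
  refine ⟨(ε/2)⁻¹ • K₀, hK₀.smul _, fun x hx => ?_⟩
  have h1 : C ((ε/2) • x) ∈ K₀ := by
    apply hball
    simp only [mem_ball, dist_zero_right, norm_smul, Real.norm_eq_abs,
      abs_of_pos (by linarith : (0:ℝ) < ε/2)]
    nlinarith
  have h2 : C x = (ε/2)⁻¹ • C ((ε/2) • x) := by
    rw [map_smul, smul_smul, inv_mul_cancel₀ (by linarith : (ε/2) ≠ 0), one_smul]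
  rw [h2]
  exact smul_mem_smul_set h1

/-- From a bounded sequence, a compact operator produces a convergent subsequence. -/
lemma exists_subseq_tendsto {C : X →L[ℝ] X} (hC : IsCompactOperator ⇑C)
    (x : ℕ → X) (hx : ∀ n, ‖x n‖ ≤ 1) :
    ∃ y, ∃ φ : ℕ → ℕ, StrictMono φ ∧ Tendsto (fun k => C (x (φ k))) atTop (𝓝 y) := by
  obtain ⟨K₀, hK₀, hmem⟩ := exists_compact_superset hC
  obtain ⟨y, -, φ, hφ, hconv⟩ := hK₀.tendsto_subseq (fun n => hmem (x n) (hx n))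
  exact ⟨y, φ, hφ, hconv⟩

/-- No uniformly separated image of a bounded sequence under a compact operator. -/
lemma no_separated_image {C : X →L[ℝ] X} (hC : IsCompactOperator ⇑C)
    (x : ℕ → X) (hx : ∀ n, ‖x n‖ ≤ 1)
    (hsep : ∀ m n, m < n → (1:ℝ)/2 ≤ ‖C (x n) - C (x m)‖) : False := by
  obtain ⟨y, φ, hφ, hconv⟩ := exists_subseq_tendsto hC x hx
  have hcauchy : CauchySeq (fun k => C (x (φ k))) := hconv.cauchySeq
  rw [Metric.cauchySeq_iff'] at hcauchy
  obtain ⟨N, hN⟩ := hcauchy (1/2) (by norm_num)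
  have h1 := hN (N+1) (by omega)
  rw [dist_eq_norm] at h1
  exact absurd h1 (not_lt.2 (hsep (φ N) (φ (N+1)) (hφ (by omega))))

/-- Relative Riesz lemma. -/
lemma riesz_rel {F G : Submodule ℝ X} (hFc : IsClosed (F : Set X)) (hlt : F < G) :
    ∃ x : X, x ∈ G ∧ ‖x‖ = 1 ∧ ∀ y ∈ F, (1:ℝ)/2 ≤ ‖x - y‖ := by
  set F' : Submodule ℝ G := F.comap G.subtype with hF'
  have hF'c : IsClosed (F' : Set G) := by
    have : (F' : Set G) = (Subtype.val) ⁻¹' (F : Set X) := rfl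
    rw [this]
    exact hFc.preimage continuous_subtype_val
  obtain ⟨g, hgG, hgF⟩ : ∃ g, g ∈ G ∧ g ∉ F := by
    obtain ⟨g, hg1, hg2⟩ := SetLike.exists_of_lt hlt
    exact ⟨g, hg1, hg2⟩
  have hex : ∃ x : G, x ∉ F' := ⟨⟨g, hgG⟩, by simpa [hF'] using hgF⟩
  obtain ⟨x₀, hx₀F, hx₀⟩ := riesz_lemma hF'c hex (show (1:ℝ)/2 < 1 by norm_num)
  have hx₀ne : x₀ ≠ 0 := fun h => hx₀F (h ▸ F'.zero_mem)
  have hn : ‖(x₀ : X)‖ ≠ 0 := by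
    simpa [norm_eq_zero] using fun h => hx₀ne (Subtype.ext (by simpa using h))
  refine ⟨‖(x₀:X)‖⁻¹ • (x₀ : X), G.smul_mem _ x₀.2, by
    simp [norm_smul, inv_mul_cancel₀ hn], fun y hy => ?_⟩
  have hyG : y ∈ G := hlt.le hy
  have hz : (⟨‖(x₀:X)‖ • y, G.smul_mem _ hyG⟩ : G) ∈ F' := by
    simpa [hF'] using F.smul_mem ‖(x₀:X)‖ hy
  have h1 := hx₀ _ hz
  have h2 : ‖x₀ - (⟨‖(x₀:X)‖ • y, G.smul_mem _ hyG⟩ : G)‖ = ‖(x₀:X) - ‖(x₀:X)‖ • y‖ := rfl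
  rw [h2] at h1
  have h3 : ‖(x₀:X)‖⁻¹ • (x₀:X) - y = ‖(x₀:X)‖⁻¹ • ((x₀:X) - ‖(x₀:X)‖ • y) := by
    rw [smul_sub, smul_smul, inv_mul_cancel₀ hn, one_smul]
  rw [h3, norm_smul, norm_inv, Real.norm_eq_abs, abs_of_nonneg (norm_nonneg _)]
  have hpos : 0 < ‖(x₀:X)‖ := lt_of_le_of_ne (norm_nonneg _) (Ne.symm hn)
  have h1' : 1/2 * ‖(x₀:X)‖ ≤ ‖(x₀:X) - ‖(x₀:X)‖ • y‖ := h1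
  calc (1:ℝ)/2 = ‖(x₀:X)‖⁻¹ * (1/2 * ‖(x₀:X)‖) := by field_simp
    _ ≤ ‖(x₀:X)‖⁻¹ * ‖(x₀:X) - ‖(x₀:X)‖ • y‖ := mul_le_mul_of_nonneg_left h1' (by positivity)

lemma findim_ker {C : X →L[ℝ] X} (hC : IsCompactOperator ⇑C) :
    FiniteDimensional ℝ (LinearMap.ker ((1 - C : X →L[ℝ] X) : X →ₗ[ℝ] X)) := by
  set N := LinearMap.ker ((1 - C : X →L[ℝ] X) : X →ₗ[ℝ] X) with hN
  have hNc : IsClosed (N : Set X) := ContinuousLinearMap.isClosed_ker (1 - C)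
  obtain ⟨K₀, hK₀, hmem⟩ := exists_compact_superset hC
  have hfix : ∀ x ∈ N, C x = x := by
    intro x hx
    have : (1 - C) x = 0 := hx
    have h2 : x - C x = 0 := by simpa [ContinuousLinearMap.sub_apply] using this
    exact (eq_of_sub_eq_zero h2).symm
  set B : Set X := (N : Set X) ∩ closedBall 0 1 with hB
  have hBK : B ⊆ K₀ := by
    rintro x ⟨hx1, hx2⟩
    rw [← hfix x hx1]
    exact hmem x (by simpa [mem_closedBall, dist_zero_right] using hx2)
  have hBclosed : IsClosed B := hNc.inter Metric.isClosed_closedBall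
  have hBcompact : IsCompact B := hK₀.of_isClosed_subset hBclosed hBK
  have hemb : Topology.IsClosedEmbedding ((↑) : N → X) := hNc.isClosedEmbedding_subtypeVal
  have hball : IsCompact (closedBall (0 : N) 1) := by
    have : closedBall (0 : N) 1 = Subtype.val ⁻¹' B := by
      ext x
      simp [hB, mem_closedBall, dist_zero_right, x.2]
    rw [this]
    exact hemb.isCompact_preimage hBcompact
  exact FiniteDimensional.of_isCompact_closedBall₀ ℝ one_pos hball

-- kernel of 1 - K is finite dimensional when K² is compact
theorem findim_ker_sq {K : X →L[ℝ] X} (h : IsCompactOperator ⇑(K * K)) :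
    FiniteDimensional ℝ (LinearMap.ker ((1 - K : X →L[ℝ] X) : X →ₗ[ℝ] X)) := by
  haveI := findim_ker h
  have hle : LinearMap.ker ((1 - K : X →L[ℝ] X) : X →ₗ[ℝ] X) ≤ LinearMap.ker ((1 - K * K : X →L[ℝ] X) : X →ₗ[ℝ] X) := by
    intro x hx
    have h1 : x - K x = 0 := by simpa [ContinuousLinearMap.sub_apply] using hx
    have h2 : K x = x := (eq_of_sub_eq_zero h1).symm
    have : x - (K * K) x = 0 := by
      simp [ContinuousLinearMap.mul_apply, h2]
    simpa [ContinuousLinearMap.sub_apply] using this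
  exact Submodule.finiteDimensional_of_le hle

theorem closed_range_sq [CompleteSpace X] {K : X →L[ℝ] X} (h : IsCompactOperator ⇑(K * K)) :
    IsClosed (Set.range ⇑(1 - K)) := by
  classical
  set T := 1 - K with hT
  set N := LinearMap.ker (T : X →ₗ[ℝ] X) with hNdef
  haveI : FiniteDimensional ℝ N := findim_ker_sq h
  obtain ⟨π₀, hπ₀⟩ := Submodule.ClosedComplemented.of_finiteDimensional N
  set π : X →L[ℝ] X := N.subtypeL.comp π₀ with hπ
  have hπN : ∀ x : X, π x ∈ N := fun x => (π₀ x).2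
  have hπid : ∀ x ∈ N, π x = x := by
    intro x hx
    have := hπ₀ ⟨x, hx⟩
    simpa [hπ] using congrArg Subtype.val this
  set M := LinearMap.ker (π : X →ₗ[ℝ] X) with hMdef
  have hMc : IsClosed (M : Set X) := ContinuousLinearMap.isClosed_ker π
  have hNM : ∀ y, y ∈ N → y ∈ M → y = 0 := by
    intro y hyN hyM
    have h1 : π y = y := hπid y hyN
    have h2 : π y = 0 := hyM
    rw [h2] at h1; exact h1.symm
  -- T is bounded below on M
  have key : ∃ c : ℝ, 0 < c ∧ ∀ x ∈ M, c * ‖x‖ ≤ ‖T x‖ := by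
    by_contra hcon
    push_neg at hcon
    have hseq : ∀ n : ℕ, ∃ u : X, u ∈ M ∧ ‖u‖ = 1 ∧ ‖T u‖ < 1 / (n + 1) := by
      intro n
      obtain ⟨x, hxM, hx⟩ := hcon (1 / (n + 1)) (by positivity)
      have hxne : x ≠ 0 := by
        rintro rfl
        simp at hx
      refine ⟨‖x‖⁻¹ • x, M.smul_mem _ hxM, ?_, ?_⟩
      · simp [norm_smul, inv_mul_cancel₀ (norm_ne_zero_iff.2 hxne)]
      · rw [map_smul, norm_smul, norm_inv, Real.norm_eq_abs, abs_of_nonneg (norm_nonneg _)]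
        rw [inv_mul_lt_iff₀ (norm_pos_iff.2 hxne)]
        calc ‖T x‖ < 1 / (n+1) * ‖x‖ := hx
          _ = ‖x‖ * (1/(n+1)) := by ring
    choose u huM hu1 huT using hseq
    have hTu0 : Tendsto (fun n => T (u n)) atTop (𝓝 0) := by
      apply squeeze_zero_norm (fun n => (huT n).le)
      exact tendsto_one_div_add_atTop_nhds_zero_nat
    -- S = (1+K) ∘ T where S = 1 - K*K
    have hS : (1 : X →L[ℝ] X) - K * K = (1 + K) * T := by
      rw [hT]; noncomm_ring
    have hSu0 : Tendsto (fun n => ((1 : X →L[ℝ] X) - K * K) (u n)) atTop (𝓝 0) := by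
      have : ∀ n, ((1 : X →L[ℝ] X) - K * K) (u n) = (1 + K) (T (u n)) := by
        intro n; rw [hS]; rfl
      simp only [this]
      have := ((1 + K : X →L[ℝ] X).continuous.tendsto 0).comp hTu0
      simpa [Function.comp_def] using this
    obtain ⟨y, φ, hφ, hKy⟩ := exists_subseq_tendsto h u (fun n => (hu1 n).le)
    have huy : Tendsto (fun k => u (φ k)) atTop (𝓝 y) := by
      have h1 : Tendsto (fun k => ((1 : X →L[ℝ] X) - K * K) (u (φ k)) + (K * K) (u (φ k)))
          atTop (𝓝 (0 + y)) := (hSu0.comp hφ.tendsto_atTop).add hKy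
      rw [zero_add] at h1
      refine h1.congr (fun k => ?_)
      simp [ContinuousLinearMap.sub_apply]
    have hyM : y ∈ M := by
      have : IsSeqClosed (M : Set X) := hMc.isSeqClosed
      exact this (fun k => huM (φ k)) huy
    have hy1 : ‖y‖ = 1 := by
      have h2 : Tendsto (fun k => ‖u (φ k)‖) atTop (𝓝 ‖y‖) :=
        (continuous_norm.tendsto y).comp huy
      have h3 : (fun k => ‖u (φ k)‖) = fun _ => (1:ℝ) := funext fun k => hu1 (φ k)
      rw [h3] at h2
      exact tendsto_nhds_unique h2 tendsto_const_nhds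
    have hyN : y ∈ N := by
      have hTy : Tendsto (fun k => T (u (φ k))) atTop (𝓝 (T y)) := (T.continuous.tendsto y).comp huy
      have hTy0 : Tendsto (fun k => T (u (φ k))) atTop (𝓝 0) := hTu0.comp hφ.tendsto_atTop
      have : T y = 0 := tendsto_nhds_unique hTy hTy0
      exact this
    have := hNM y hyN hyM
    rw [this] at hy1
    simp at hy1
  obtain ⟨c, hc, hbound⟩ := key
  -- antilipschitz on M
  set f : M →L[ℝ] X := T.comp M.subtypeL with hf
  have hbound' : ∀ x : M, ‖x‖ ≤ (((⟨c, hc.le⟩ : NNReal) : ℝ))⁻¹ * ‖f x‖ := by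
    intro x
    have h3 : c * ‖(x : X)‖ ≤ ‖f x‖ := hbound x x.2
    have hx : ‖x‖ = ‖(x : X)‖ := rfl
    rw [hx, le_inv_mul_iff₀ hc]
    exact h3
  have hanti : AntilipschitzWith (⟨c, hc.le⟩ : NNReal)⁻¹ ⇑f :=
    f.antilipschitz_of_bound (by
      intro x
      exact_mod_cast hbound' x)
  haveI : CompleteSpace M := hMc.completeSpace_coe
  have hclosed : IsClosed (Set.range ⇑f) := hanti.isClosed_range f.uniformContinuous
  have hrange : Set.range ⇑T = Set.range ⇑f := by
    ext z
    constructor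
    · rintro ⟨x, rfl⟩
      have hx1 : x - π x ∈ M := by
        have : π (x - π x) = 0 := by
          rw [map_sub, hπid (π x) (hπN x), sub_self]
        exact this
      refine ⟨⟨x - π x, hx1⟩, ?_⟩
      have hTπ : T (π x) = 0 := by
        have : π x ∈ N := hπN x
        exact this
      have : f ⟨x - π x, hx1⟩ = T (x - π x) := rfl
      rw [this, map_sub, hTπ, sub_zero]
    · rintro ⟨x, rfl⟩
      exact ⟨x, rfl⟩
  rw [show Set.range ⇑(1 - K) = Set.range ⇑T from rfl, hrange]
  exact hclosed

/-- `(1-C)^n = 1 - D` with `D` compact, for `n ≥ 1`. -/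
lemma pow_one_sub_eq {C : X →L[ℝ] X} (hC : IsCompactOperator ⇑C) :
    ∀ n : ℕ, 1 ≤ n → ∃ D : X →L[ℝ] X, IsCompactOperator ⇑D ∧ (1 - C)^n = 1 - D := by
  intro n hn
  induction n with
  | zero => omega
  | succ m ih =>
    rcases Nat.eq_or_lt_of_le hn with h1 | h1
    · exact ⟨C, hC, by rw [← h1]; simp⟩
    · obtain ⟨D, hD, hpow⟩ := ih (by omega)
      refine ⟨C + D - D * C, ?_, ?_⟩
      · have h2 : IsCompactOperator (⇑C + (⇑D - ⇑D ∘ ⇑C)) :=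
          hC.add (hD.sub (hD.comp_clm C))
        have h3 : ⇑(C + D - D * C) = ⇑C + (⇑D - ⇑D ∘ ⇑C) := by
          funext x
          simp [ContinuousLinearMap.sub_apply, ContinuousLinearMap.add_apply,
            ContinuousLinearMap.mul_apply]
          abel
        rw [h3]; exact h2
      · rw [pow_succ, hpow]; noncomm_ring

/-- Compactness of `D * D` from compactness of `D`. -/
lemma sq_compact {D : X →L[ℝ] X} (hD : IsCompactOperator ⇑D) :
    IsCompactOperator ⇑(D * D) := by
  have h2 : IsCompactOperator (⇑D ∘ ⇑D) := hD.comp_clm D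
  have h3 : ⇑(D * D) = ⇑D ∘ ⇑D := by funext x; simp [ContinuousLinearMap.mul_apply]
  rw [h3]; exact h2

variable [CompleteSpace X]

/-- The ranges of powers of `1 - C` are closed. -/
lemma isClosed_range_pow {C : X →L[ℝ] X} (hC : IsCompactOperator ⇑C) (n : ℕ) :
    IsClosed ((LinearMap.range (((1 - C)^n : X →L[ℝ] X) : X →ₗ[ℝ] X) : Submodule ℝ X) : Set X) := by
  rcases Nat.eq_zero_or_pos n with h | h
  · subst h
    simp only [pow_zero]
    have : (LinearMap.range (((1 : X →L[ℝ] X) : X →L[ℝ] X) : X →ₗ[ℝ] X) : Submodule ℝ X) = ⊤ := by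
      apply LinearMap.range_eq_top.2
      intro x; exact ⟨x, rfl⟩
    rw [this]
    simp
  · obtain ⟨D, hD, hpow⟩ := pow_one_sub_eq hC n h
    rw [hpow]
    have h2 : ((LinearMap.range ((1 - D : X →L[ℝ] X) : X →ₗ[ℝ] X) : Submodule ℝ X) : Set X) = Set.range ⇑(1 - D) := by
      ext x; simp [LinearMap.mem_range]
    rw [h2]
    exact closed_range_sq (sq_compact hD)

variable {C : X →L[ℝ] X}

local notation "S" => (1 - C : X →L[ℝ] X)

lemma pow_apply_add (a b : ℕ) (x : X) : (S^(a+b)) x = (S^a) ((S^b) x) := by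
  rw [pow_add]; rfl

lemma pow_apply_succ (n : ℕ) (x : X) : (S^(n+1)) x = (S^n) ((S) x) := by
  rw [pow_succ]; rfl

lemma pow_apply_succ' (n : ℕ) (x : X) : (S^(n+1)) x = (S) ((S^n) x) := by
  rw [pow_succ']; rfl

lemma Nc_mono : Monotone (fun n => LinearMap.ker ((S^n : X →L[ℝ] X) : X →ₗ[ℝ] X)) := by
  apply monotone_nat_of_le_succ
  intro n x hx
  have hx' : (S^n) x = 0 := hx
  have : (S^(n+1)) x = 0 := by
    rw [pow_apply_succ', hx', map_zero]
  exact this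

lemma Rc_anti : Antitone (fun n => LinearMap.range ((S^n : X →L[ℝ] X) : X →ₗ[ℝ] X)) := by
  apply antitone_nat_of_succ_le
  intro n z hz
  obtain ⟨x, hx⟩ := hz
  exact ⟨(S) x, by simp only [ContinuousLinearMap.coe_coe] at hx ⊢; rw [← hx, ← pow_apply_succ]⟩

lemma Rc_succ (n : ℕ) :
    LinearMap.range ((S^(n+1) : X →L[ℝ] X) : X →ₗ[ℝ] X) = Submodule.map ((S : X →L[ℝ] X) : X →ₗ[ℝ] X) (LinearMap.range ((S^n : X →L[ℝ] X) : X →ₗ[ℝ] X)) := by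
  ext z
  simp only [LinearMap.mem_range, Submodule.mem_map, ContinuousLinearMap.coe_coe]
  constructor
  · rintro ⟨x, hx⟩
    exact ⟨(S^n) x, ⟨x, rfl⟩, by rw [← hx, pow_apply_succ']⟩
  · rintro ⟨y, ⟨x, rfl⟩, hy⟩
    exact ⟨x, by rw [← hy, pow_apply_succ']⟩

lemma ker_stab_exists (hC : IsCompactOperator ⇑C) :
    ∃ p, LinearMap.ker ((S^(p+1) : X →L[ℝ] X) : X →ₗ[ℝ] X) = LinearMap.ker ((S^p : X →L[ℝ] X) : X →ₗ[ℝ] X) := by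
  by_contra hcon
  push_neg at hcon
  have hlt : ∀ n, LinearMap.ker ((S^n : X →L[ℝ] X) : X →ₗ[ℝ] X) < LinearMap.ker ((S^(n+1) : X →L[ℝ] X) : X →ₗ[ℝ] X) := fun n =>
    lt_of_le_of_ne (Nc_mono (by omega)) (Ne.symm (hcon n))
  have hclosed : ∀ n, IsClosed ((LinearMap.ker ((S^n : X →L[ℝ] X) : X →ₗ[ℝ] X) : Submodule ℝ X) : Set X) := fun n =>
    ContinuousLinearMap.isClosed_ker (S^n)
  choose x hxG hx1 hxsep using fun n => riesz_rel (hclosed n) (hlt n)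
  apply no_separated_image hC x (fun n => (hx1 n).le)
  intro m n hmn
  have hkey : C (x n) - C (x m) = x n - ((S) (x n) + x m - (S) (x m)) := by
    simp [ContinuousLinearMap.sub_apply]; abel
  rw [hkey]
  apply hxsep n
  have h1 : (S) (x n) ∈ LinearMap.ker ((S^n : X →L[ℝ] X) : X →ₗ[ℝ] X) := by
    have : (S^(n+1)) (x n) = 0 := hxG n
    have h2 : (S^n) ((S) (x n)) = 0 := by rw [← pow_apply_succ]; exact this
    exact h2
  have h2 : x m ∈ LinearMap.ker ((S^n : X →L[ℝ] X) : X →ₗ[ℝ] X) := Nc_mono (show m+1 ≤ n by omega) (hxG m)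
  have h3 : (S) (x m) ∈ LinearMap.ker ((S^n : X →L[ℝ] X) : X →ₗ[ℝ] X) := by
    have hm : (S^m) ((S) (x m)) = 0 := by rw [← pow_apply_succ]; exact hxG m
    exact Nc_mono (show m ≤ n by omega) hm
  exact Submodule.sub_mem _ (Submodule.add_mem _ h1 h2) h3

lemma ker_stab_all {p : ℕ} (hstab : LinearMap.ker ((S^(p+1) : X →L[ℝ] X) : X →ₗ[ℝ] X) = LinearMap.ker ((S^p : X →L[ℝ] X) : X →ₗ[ℝ] X)) :
    ∀ k, LinearMap.ker ((S^(p+k) : X →L[ℝ] X) : X →ₗ[ℝ] X) = LinearMap.ker ((S^p : X →L[ℝ] X) : X →ₗ[ℝ] X) := by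
  intro k
  induction k with
  | zero => rfl
  | succ k ih =>
    apply le_antisymm
    · intro x hx
      have hx' : (S^(p+k+1)) x = 0 := hx
      have h1 : (S^(p+1)) ((S^k) x) = 0 := by
        rw [← pow_apply_add (p+1) k, show p+1+k = p+k+1 by omega]; exact hx'
      have h2 : (S^p) ((S^k) x) = 0 := by
        have hm : (S^k) x ∈ LinearMap.ker ((S^(p+1) : X →L[ℝ] X) : X →ₗ[ℝ] X) := h1
        rw [hstab] at hm
        exact hm
      have h3 : x ∈ LinearMap.ker ((S^(p+k) : X →L[ℝ] X) : X →ₗ[ℝ] X) := by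
        show (S^(p+k)) x = 0
        rw [pow_apply_add p k]; exact h2
      rw [ih] at h3
      exact h3
    · rw [show p+(k+1) = p+k+1 by omega]
      exact le_trans (le_of_eq ih.symm) (Nc_mono (by omega))

lemma range_stab_exists [CompleteSpace X] (hC : IsCompactOperator ⇑C) :
    ∃ p, LinearMap.range ((S^(p+1) : X →L[ℝ] X) : X →ₗ[ℝ] X) = LinearMap.range ((S^p : X →L[ℝ] X) : X →ₗ[ℝ] X) := by
  by_contra hcon
  push_neg at hcon
  have hlt : ∀ n, LinearMap.range ((S^(n+1) : X →L[ℝ] X) : X →ₗ[ℝ] X) < LinearMap.range ((S^n : X →L[ℝ] X) : X →ₗ[ℝ] X) := fun n =>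
    lt_of_le_of_ne (Rc_anti (by omega)) (hcon n)
  choose x hxG hx1 hxsep using fun n =>
    riesz_rel (isClosed_range_pow hC (n+1)) (hlt n)
  apply no_separated_image hC x (fun n => (hx1 n).le)
  intro m n hmn
  rw [norm_sub_rev]
  have hkey : C (x m) - C (x n) = x m - ((S) (x m) + x n - (S) (x n)) := by
    simp [ContinuousLinearMap.sub_apply]; abel
  rw [hkey]
  apply hxsep m
  have h1 : (S) (x m) ∈ LinearMap.range ((S^(m+1) : X →L[ℝ] X) : X →ₗ[ℝ] X) := by
    obtain ⟨y, hy⟩ := hxG m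
    exact ⟨y, by simp only [ContinuousLinearMap.coe_coe] at hy ⊢; rw [pow_apply_succ', hy]⟩
  have h2 : x n ∈ LinearMap.range ((S^(m+1) : X →L[ℝ] X) : X →ₗ[ℝ] X) := Rc_anti (show m+1 ≤ n by omega) (hxG n)
  have h3 : (S) (x n) ∈ LinearMap.range ((S^(m+1) : X →L[ℝ] X) : X →ₗ[ℝ] X) := by
    obtain ⟨y, hy⟩ := hxG n
    have : (S) (x n) ∈ LinearMap.range ((S^(n+1) : X →L[ℝ] X) : X →ₗ[ℝ] X) := ⟨y, by simp only [ContinuousLinearMap.coe_coe] at hy ⊢; rw [pow_apply_succ', hy]⟩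
    exact Rc_anti (show m+1 ≤ n+1 by omega) this
  exact Submodule.sub_mem _ (Submodule.add_mem _ h1 h2) h3

lemma range_stab_all {p : ℕ} (hstab : LinearMap.range ((S^(p+1) : X →L[ℝ] X) : X →ₗ[ℝ] X) = LinearMap.range ((S^p : X →L[ℝ] X) : X →ₗ[ℝ] X)) :
    ∀ k, LinearMap.range ((S^(p+k) : X →L[ℝ] X) : X →ₗ[ℝ] X) = LinearMap.range ((S^p : X →L[ℝ] X) : X →ₗ[ℝ] X) := by
  intro k
  induction k with
  | zero => rfl
  | succ k ih =>
    have : LinearMap.range ((S^(p+k+1) : X →L[ℝ] X) : X →ₗ[ℝ] X) = Submodule.map ((S : X →L[ℝ] X) : X →ₗ[ℝ] X) (LinearMap.range ((S^(p+k) : X →L[ℝ] X) : X →ₗ[ℝ] X)) :=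
      Rc_succ (p+k)
    rw [show p+(k+1) = p+k+1 by omega, this, ih, ← Rc_succ p, hstab]

lemma stab_exists [CompleteSpace X] (hC : IsCompactOperator ⇑C) :
    ∃ p, 1 ≤ p ∧ (∀ k, LinearMap.ker ((S^(p+k) : X →L[ℝ] X) : X →ₗ[ℝ] X) = LinearMap.ker ((S^p : X →L[ℝ] X) : X →ₗ[ℝ] X)) ∧
      (∀ k, LinearMap.range ((S^(p+k) : X →L[ℝ] X) : X →ₗ[ℝ] X) = LinearMap.range ((S^p : X →L[ℝ] X) : X →ₗ[ℝ] X)) := by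
  obtain ⟨p₁, hp₁⟩ := ker_stab_exists hC
  obtain ⟨p₂, hp₂⟩ := range_stab_exists hC
  refine ⟨p₁ + p₂ + 1, by omega, ?_, ?_⟩
  · intro k
    have h1 := ker_stab_all hp₁
    have e1 : LinearMap.ker ((S^(p₁+p₂+1+k) : X →L[ℝ] X) : X →ₗ[ℝ] X) = LinearMap.ker ((S^p₁ : X →L[ℝ] X) : X →ₗ[ℝ] X) := by
      rw [show p₁+p₂+1+k = p₁+(p₂+1+k) by omega]; exact h1 _
    have e2 : LinearMap.ker ((S^(p₁+p₂+1) : X →L[ℝ] X) : X →ₗ[ℝ] X) = LinearMap.ker ((S^p₁ : X →L[ℝ] X) : X →ₗ[ℝ] X) := by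
      rw [show p₁+p₂+1 = p₁+(p₂+1) by omega]; exact h1 _
    rw [e1, e2]
  · intro k
    have h1 := range_stab_all hp₂
    have e1 : LinearMap.range ((S^(p₁+p₂+1+k) : X →L[ℝ] X) : X →ₗ[ℝ] X) = LinearMap.range ((S^p₂ : X →L[ℝ] X) : X →ₗ[ℝ] X) := by
      rw [show p₁+p₂+1+k = p₂+(p₁+1+k) by omega]; exact h1 _
    have e2 : LinearMap.range ((S^(p₁+p₂+1) : X →L[ℝ] X) : X →ₗ[ℝ] X) = LinearMap.range ((S^p₂ : X →L[ℝ] X) : X →ₗ[ℝ] X) := by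
      rw [show p₁+p₂+1 = p₂+(p₁+1) by omega]; exact h1 _
    rw [e1, e2]

end

end Nik

/-- `T` is a Fredholm operator of index zero: closed range, finite-dimensional kernel and
cokernel, and the kernel and cokernel have the same (finite) dimension. -/
def IsFredholmIndexZero {X : Type*} [NormedAddCommGroup X] [NormedSpace ℝ X]
    (T : X →L[ℝ] X) : Prop :=
  IsClosed (Set.range T) ∧
    FiniteDimensional ℝ (LinearMap.ker (T : X →ₗ[ℝ] X)) ∧
    FiniteDimensional ℝ (X ⧸ LinearMap.range (T : X →ₗ[ℝ] X)) ∧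
    Module.finrank ℝ (LinearMap.ker (T : X →ₗ[ℝ] X)) =
      Module.finrank ℝ (X ⧸ LinearMap.range (T : X →ₗ[ℝ] X))

theorem stmt4 {X : Type*} [NormedAddCommGroup X] [NormedSpace ℝ X] [CompleteSpace X]
    (K : X →L[ℝ] X) (h : IsCompactOperator ⇑(K ∘L K)) :
    IsFredholmIndexZero (1 - K) := by
  classical
  have hC : IsCompactOperator ⇑(K * K) := h
  set T : X →L[ℝ] X := 1 - K with hTdef
  set S : X →L[ℝ] X := 1 - K * K with hSdef
  -- commutation facts
  have hcomm : Commute S T := by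
    show S * T = T * S
    rw [hSdef, hTdef]; noncomm_ring
  have hcomm' : Commute S (1 + K) := by
    show S * (1 + K) = (1 + K) * S
    rw [hSdef]; noncomm_ring
  have hfact1 : S = (1 + K) * T := by rw [hSdef, hTdef]; noncomm_ring
  have hfact2 : S = T * (1 + K) := by rw [hSdef, hTdef]; noncomm_ring
  obtain ⟨p, hp1, hkstab, hrstab⟩ := Nik.stab_exists hC
  set N : Submodule ℝ X := LinearMap.ker ((S^p : X →L[ℝ] X) : X →ₗ[ℝ] X) with hNdef
  set R : Submodule ℝ X := LinearMap.range ((S^p : X →L[ℝ] X) : X →ₗ[ℝ] X) with hRdef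
  have hpow_apply : ∀ (A : X →L[ℝ] X) (a b : ℕ) (x : X), (A^(a+b)) x = (A^a) ((A^b) x) := by
    intro A a b x; rw [pow_add]; rfl
  -- N is finite dimensional
  haveI hNfin : FiniteDimensional ℝ N := by
    obtain ⟨D, hD, hpow⟩ := Nik.pow_one_sub_eq hC p hp1
    have : N = LinearMap.ker ((1 - D : X →L[ℝ] X) : X →ₗ[ℝ] X) := by rw [hNdef, hpow]
    rw [this]
    exact Nik.findim_ker hD
  -- invariance
  have hSpT : ∀ x : X, (S^p) (T x) = T ((S^p) x) := by
    intro x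
    have := (hcomm.pow_left p).eq
    calc (S^p) (T x) = ((S^p) * T) x := rfl
      _ = (T * (S^p)) x := by rw [this]
      _ = T ((S^p) x) := rfl
  have hSp1K : ∀ x : X, (S^p) ((1 + K) x) = (1 + K) ((S^p) x) := by
    intro x
    have := (hcomm'.pow_left p).eq
    calc (S^p) ((1+K) x) = ((S^p) * (1+K)) x := rfl
      _ = ((1+K) * (S^p)) x := by rw [this]
      _ = (1+K) ((S^p) x) := rfl
  have hTN : ∀ x ∈ N, T x ∈ N := by
    intro x hx
    show (S^p) (T x) = 0
    rw [hSpT, show (S^p) x = 0 from hx, map_zero]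
  have hTR : ∀ x ∈ R, T x ∈ R := by
    rintro x ⟨y, rfl⟩
    exact ⟨T y, hSpT y⟩
  have h1KR : ∀ x ∈ R, (1 + K) x ∈ R := by
    rintro x ⟨y, rfl⟩
    exact ⟨(1+K) y, hSp1K y⟩
  -- N ⊓ R = ⊥ and N ⊔ R = ⊤
  have hdisj : N ⊓ R = ⊥ := by
    rw [eq_bot_iff]
    rintro x ⟨hxN, y, rfl⟩
    have h1 : (S^(p+p)) y = 0 := by rw [hpow_apply]; exact hxN
    have h2 : y ∈ LinearMap.ker (((1 - K*K)^(p+p) : X →L[ℝ] X) : X →ₗ[ℝ] X) := h1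
    rw [hkstab p] at h2
    simp only [Submodule.mem_bot]
    show (S^p) y = 0
    exact h2
  have hspan : N ⊔ R = ⊤ := by
    rw [eq_top_iff]
    intro x _
    have h1 : (S^p) x ∈ LinearMap.range ((S^(p+p) : X →L[ℝ] X) : X →ₗ[ℝ] X) := by
      rw [hrstab p]
      exact ⟨x, rfl⟩
    obtain ⟨y, hy⟩ := h1
    have h2 : x - (S^p) y ∈ N := by
      show (S^p) (x - (S^p) y) = 0
      rw [ContinuousLinearMap.coe_coe] at hy; rw [map_sub, ← hpow_apply, hy, sub_self]
    have h3 : (S^p) y ∈ R := ⟨y, rfl⟩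
    have : x = (x - (S^p) y) + (S^p) y := by abel
    rw [this]
    exact Submodule.add_mem _ (Submodule.mem_sup_left h2) (Submodule.mem_sup_right h3)
  have hcompl : IsCompl N R := ⟨disjoint_iff.2 hdisj, codisjoint_iff.2 hspan⟩
  -- kernel of T is inside N
  have hkerT : LinearMap.ker (T : X →ₗ[ℝ] X) ≤ N := by
    intro x hx
    have h1 : S x = 0 := by
      have : S x = (1 + K) (T x) := by rw [hfact1]; rfl
      rw [this, show T x = 0 from hx, map_zero]
    have h2 : x ∈ LinearMap.ker ((S^1 : X →L[ℝ] X) : X →ₗ[ℝ] X) := by rw [pow_one]; exact h1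
    have h3 : LinearMap.ker ((S^1 : X →L[ℝ] X) : X →ₗ[ℝ] X) ≤ LinearMap.ker ((S^p : X →L[ℝ] X) : X →ₗ[ℝ] X) := by
      intro z hz
      show (S^p) z = 0
      have e1 : (S^p) z = (S^(p-1)) ((S^1) z) := by
        rw [← hpow_apply, show p-1+1 = p by omega]
      rw [e1, show (S^1) z = 0 from hz, map_zero]
    exact h3 h2
  -- T is bijective on R
  have hTinjR : ∀ x ∈ R, T x = 0 → x = 0 := by
    intro x hxR hTx
    have hxN : x ∈ N := hkerT hTx
    have : x ∈ N ⊓ R := ⟨hxN, hxR⟩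
    rw [hdisj] at this
    exact this
  have hTsurjR : ∀ z ∈ R, ∃ x ∈ R, T x = z := by
    intro z hz
    have h1 : z ∈ LinearMap.range ((S^(p+1) : X →L[ℝ] X) : X →ₗ[ℝ] X) := by rw [hrstab 1]; exact hz
    obtain ⟨w, hw⟩ := h1
    have hy : S ((S^p) w) = z := by
      have e1 : (S^(p+1)) w = (S^(1+p)) w := by rw [show p+1 = 1+p by omega]
      have e2 : (S^(1+p)) w = (S^1) ((S^p) w) := hpow_apply S 1 p w
      rw [ContinuousLinearMap.coe_coe] at hw; rw [← hw, e1, e2, pow_one]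
    refine ⟨(1 + K) ((S^p) w), h1KR _ ⟨w, rfl⟩, ?_⟩
    have : T ((1+K) ((S^p) w)) = (T * (1 + K)) ((S^p) w) := rfl
    rw [this, ← hfact2, hy]
  -- Now assemble the Fredholm data
  set Tl : X →ₗ[ℝ] X := (T : X →ₗ[ℝ] X) with hTl
  have hTlapp : ∀ x, Tl x = T x := fun x => rfl
  have hkerTl : LinearMap.ker Tl ≤ N := fun x hx => hkerT (by
    show T x = 0
    rw [← hTlapp]; exact hx)
  have hTNl : ∀ x ∈ N, Tl x ∈ N := fun x hx => by rw [hTlapp]; exact hTN x hx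
  set T' : N →ₗ[ℝ] N := Tl.restrict hTNl with hT'
  -- kernel equivalence
  have hker_restrict : LinearMap.ker T' = (LinearMap.ker Tl).comap N.subtype :=
    LinearMap.ker_restrict hTNl
  have eker : ((LinearMap.ker Tl).comap N.subtype) ≃ₗ[ℝ] LinearMap.ker Tl :=
    Submodule.comapSubtypeEquivOfLe hkerTl
  haveI hfinker : FiniteDimensional ℝ (LinearMap.ker Tl) :=
    eker.finiteDimensional
  have hfr_ker : Module.finrank ℝ (LinearMap.ker Tl) = Module.finrank ℝ (LinearMap.ker T') := by
    rw [hker_restrict]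
    exact (LinearEquiv.finrank_eq eker).symm
  -- cokernel equivalence
  set proj : X →ₗ[ℝ] N := N.linearProjOfIsCompl R hcompl with hproj
  have hproj_left : ∀ x : N, proj (x : X) = x := fun x =>
    Submodule.linearProjOfIsCompl_apply_left hcompl x
  have hproj_right : ∀ x ∈ R, proj x = 0 := fun x hx =>
    Submodule.projectionOnto_apply_of_mem_right hcompl hx
  have hsub_mem_R : ∀ x : X, x - (proj x : X) ∈ R := by
    intro x
    have : proj (x - (proj x : X)) = 0 := by
      rw [map_sub, hproj_left (proj x), sub_self]
    have h2 : x - (proj x : X) ∈ LinearMap.ker proj := this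
    exact (Submodule.projectionOnto_apply_eq_zero_iff hcompl).1 this
  set q : X →ₗ[ℝ] (N ⧸ LinearMap.range T') :=
    (LinearMap.range T').mkQ.comp proj with hq
  have hqsurj : Function.Surjective q := by
    intro c
    obtain ⟨n, rfl⟩ := (LinearMap.range T').mkQ_surjective c
    exact ⟨(n : X), by simp [hq, hproj_left n]⟩
  have hkerq : LinearMap.ker q = LinearMap.range Tl := by
    ext x
    simp only [LinearMap.mem_ker, LinearMap.mem_range, hq, LinearMap.comp_apply,
      Submodule.mkQ_apply, Submodule.Quotient.mk_eq_zero]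
    constructor
    · intro hx
      obtain ⟨m, hm⟩ := hx
      have hm' : (Tl (m : X) : X) = ((proj x : N) : X) := by
        have := congrArg (Subtype.val) hm
        exact this
      obtain ⟨r', hr'R, hr'⟩ := hTsurjR (x - (proj x : X)) (hsub_mem_R x)
      refine ⟨(m : X) + r', ?_⟩
      rw [map_add, hm', hTlapp, hr']
      abel
    · rintro ⟨y, rfl⟩
      have hdec : Tl y = T ((proj y : X)) + T (y - (proj y : X)) := by
        rw [← map_add, hTlapp]
        congr 1
        abel
      have h1 : proj (Tl y) = T' (proj y) := by
        rw [hdec, map_add]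
        have ha : proj (T ((proj y : X))) = T' (proj y) := by
          have hmem : T ((proj y : X)) ∈ N := hTN _ (proj y).2
          have : T ((proj y : X)) = ((⟨T ((proj y : X)), hmem⟩ : N) : X) := rfl
          rw [this, hproj_left]
          apply Subtype.ext
          rfl
        have hb : proj (T (y - (proj y : X))) = 0 :=
          hproj_right _ (hTR _ (hsub_mem_R y))
        rw [ha, hb, add_zero]
      rw [h1]
      exact ⟨proj y, rfl⟩
  have e : (X ⧸ LinearMap.range Tl) ≃ₗ[ℝ] (N ⧸ LinearMap.range T') :=
    (Submodule.quotEquivOfEq (LinearMap.range Tl) (LinearMap.ker q) hkerq.symm).trans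
      (q.quotKerEquivOfSurjective hqsurj)
  haveI : FiniteDimensional ℝ (N ⧸ LinearMap.range T') := inferInstance
  haveI hfincoker : FiniteDimensional ℝ (X ⧸ LinearMap.range Tl) := e.symm.finiteDimensional
  have hfr_coker : Module.finrank ℝ (X ⧸ LinearMap.range Tl) =
      Module.finrank ℝ (N ⧸ LinearMap.range T') := LinearEquiv.finrank_eq e
  have hrank1 := LinearMap.finrank_range_add_finrank_ker T'
  have hrank2 := Submodule.finrank_quotient_add_finrank (LinearMap.range T')
  refine ⟨?_, ?_, ?_, ?_⟩
  · exact Nik.closed_range_sq hC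
  · exact hfinker
  · exact hfincoker
  · rw [hfr_ker, hfr_coker]
    omega
end

section
/- Let a, b : [0,1] → ℝ be continuous with a(x) > 0 for all x, let ω ∈ ℝ, and let v, f : ℝ × [0,1] → ℝ be continuous, 2π-periodic in t, with v continuously differentiable, satisfying ω ∂_t v(t,x) − a(x) ∂_x v(t,x) − b(x) v(t,x) = f(t,x) for all (t,x). Define c(x,ξ) = exp( ∫_x^ξ b(η)/a(η) dη ) and A(x,ξ) = ∫_ξ^x dη/a(η). Then for all t ∈ ℝ and x ∈ [0,1]: v(t,x) − c(x,0) v(t + ω A(x,0), 0) = − ∫₀ˣ ( c(x,ξ)/a(ξ) ) f( t + ω A(x,ξ), ξ ) dξ. -/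
open Set intervalIntegral

lemma abs_sub_le_of_mem_uIoc {p q y : ℝ} (h : y ∈ Set.uIoc p q) : |y - p| ≤ |q - p| := by
  rcases Set.mem_uIoc.mp h with ⟨h1, h2⟩ | ⟨h1, h2⟩ <;>
    exact abs_le.mpr ⟨by linarith [neg_abs_le (q - p), abs_nonneg (q - p), le_abs_self (q - p)],
      by linarith [neg_abs_le (q - p), abs_nonneg (q - p), le_abs_self (q - p)]⟩

lemma hasFDerivAt_of_partials (v vt vx : ℝ → ℝ → ℝ)
    (hvt : ∀ t x, HasDerivAt (fun s => v s x) (vt t x) t)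
    (hvx : ∀ t x, HasDerivAt (fun y => v t y) (vx t x) x)
    (hvtc : Continuous ↿vt) (hvxc : Continuous ↿vx) (p : ℝ × ℝ) :
    HasFDerivAt ↿v
      (vt p.1 p.2 • ContinuousLinearMap.fst ℝ ℝ ℝ + vx p.1 p.2 • ContinuousLinearMap.snd ℝ ℝ ℝ)
      p := by
  rw [hasFDerivAt_iff_isLittleO, Asymptotics.isLittleO_iff]
  intro c hc
  obtain ⟨δ1, hδ1, h1⟩ := Metric.continuousAt_iff.mp hvtc.continuousAt (c / 2) (by positivity)
  obtain ⟨δ2, hδ2, h2⟩ := Metric.continuousAt_iff.mp hvxc.continuousAt (c / 2) (by positivity)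
  filter_upwards [Metric.ball_mem_nhds p (lt_min hδ1 hδ2)] with q hq
  rw [Metric.mem_ball] at hq
  have hcont1 : Continuous fun σ => vt σ q.2 := hvtc.comp (continuous_id.prodMk continuous_const)
  have hcont2 : Continuous fun η => vx p.1 η := hvxc.comp (continuous_const.prodMk continuous_id)
  have e1 : ∫ σ in p.1..q.1, vt σ q.2 = v q.1 q.2 - v p.1 q.2 :=
    integral_eq_sub_of_hasDerivAt (fun σ _ => hvt σ q.2) (hcont1.intervalIntegrable _ _)
  have e2 : ∫ η in p.2..q.2, vx p.1 η = v p.1 q.2 - v p.1 p.2 :=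
    integral_eq_sub_of_hasDerivAt (fun η _ => hvx p.1 η) (hcont2.intervalIntegrable _ _)
  have key : (↿v) q - (↿v) p -
      ((vt p.1 p.2 • ContinuousLinearMap.fst ℝ ℝ ℝ +
        vx p.1 p.2 • ContinuousLinearMap.snd ℝ ℝ ℝ) (q - p))
      = (∫ σ in p.1..q.1, (vt σ q.2 - vt p.1 p.2)) +
        (∫ η in p.2..q.2, (vx p.1 η - vx p.1 p.2)) := by
    rw [integral_sub (hcont1.intervalIntegrable _ _) intervalIntegrable_const,
      integral_sub (hcont2.intervalIntegrable _ _) intervalIntegrable_const,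
      integral_const, integral_const, e1, e2]
    show v q.1 q.2 - v p.1 p.2 - _ = _
    simp only [ContinuousLinearMap.add_apply, ContinuousLinearMap.coe_smul',
      Pi.smul_apply, ContinuousLinearMap.coe_fst', ContinuousLinearMap.coe_snd',
      Prod.fst_sub, Prod.snd_sub, smul_eq_mul]
    ring
  rw [key]
  have hb1 : ‖∫ σ in p.1..q.1, (vt σ q.2 - vt p.1 p.2)‖ ≤ c / 2 * |q.1 - p.1| := by
    apply norm_integral_le_of_norm_le_const
    intro σ hσ
    have hd : dist (σ, q.2) p < δ1 := by
      rw [Prod.dist_eq]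
      have h1' : dist σ p.1 ≤ dist q.1 p.1 := by
        rw [Real.dist_eq, Real.dist_eq]; exact abs_sub_le_of_mem_uIoc hσ
      have h2' : dist q.2 p.2 ≤ dist q p := by
        rw [Prod.dist_eq]; exact le_max_right _ _
      have h3' : dist q.1 p.1 ≤ dist q p := by
        rw [Prod.dist_eq]; exact le_max_left _ _
      exact max_lt (lt_of_le_of_lt (h1'.trans h3') (lt_of_lt_of_le hq (min_le_left _ _)))
        (lt_of_le_of_lt h2' (lt_of_lt_of_le hq (min_le_left _ _)))
    have h5 := h1 hd
    rw [show (↿vt) (σ, q.2) = vt σ q.2 from rfl, show (↿vt) p = vt p.1 p.2 from rfl,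
      dist_eq_norm] at h5
    exact h5.le
  have hb2 : ‖∫ η in p.2..q.2, (vx p.1 η - vx p.1 p.2)‖ ≤ c / 2 * |q.2 - p.2| := by
    apply norm_integral_le_of_norm_le_const
    intro η hη
    have hd : dist (p.1, η) p < δ2 := by
      rw [Prod.dist_eq]
      have h1' : dist η p.2 ≤ dist q.2 p.2 := by
        rw [Real.dist_eq, Real.dist_eq]; exact abs_sub_le_of_mem_uIoc hη
      have h2' : dist q.2 p.2 ≤ dist q p := by
        rw [Prod.dist_eq]; exact le_max_right _ _
      simp only [dist_self]
      exact max_lt hδ2 (lt_of_le_of_lt (h1'.trans h2') (lt_of_lt_of_le hq (min_le_right _ _)))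
    have h5 := h2 hd
    rw [show (↿vx) (p.1, η) = vx p.1 η from rfl, show (↿vx) p = vx p.1 p.2 from rfl,
      dist_eq_norm] at h5
    exact h5.le
  have hn1 : |q.1 - p.1| ≤ ‖q - p‖ := by
    have := norm_fst_le (q - p)
    simpa [Real.norm_eq_abs] using this
  have hn2 : |q.2 - p.2| ≤ ‖q - p‖ := by
    have := norm_snd_le (q - p)
    simpa [Real.norm_eq_abs] using this
  calc ‖(∫ σ in p.1..q.1, (vt σ q.2 - vt p.1 p.2)) +
        (∫ η in p.2..q.2, (vx p.1 η - vx p.1 p.2))‖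
      ≤ ‖∫ σ in p.1..q.1, (vt σ q.2 - vt p.1 p.2)‖ +
        ‖∫ η in p.2..q.2, (vx p.1 η - vx p.1 p.2)‖ := norm_add_le _ _
    _ ≤ c / 2 * |q.1 - p.1| + c / 2 * |q.2 - p.2| := add_le_add hb1 hb2
    _ ≤ c / 2 * ‖q - p‖ + c / 2 * ‖q - p‖ := by
        gcongr
    _ = c * ‖q - p‖ := by ring

theorem stmt7 (a b : ℝ → ℝ) (ha : ContinuousOn a (Set.Icc 0 1))
    (hb : ContinuousOn b (Set.Icc 0 1)) (hapos : ∀ x ∈ Set.Icc (0:ℝ) 1, 0 < a x)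
    (ω : ℝ) (v f vt vx : ℝ → ℝ → ℝ)
    (hv : Continuous ↿v) (hf : Continuous ↿f)
    (hvper : ∀ t x, v (t + 2 * Real.pi) x = v t x)
    (hfper : ∀ t x, f (t + 2 * Real.pi) x = f t x)
    (hvt : ∀ t x, HasDerivAt (fun s => v s x) (vt t x) t)
    (hvx : ∀ t x, HasDerivAt (fun y => v t y) (vx t x) x)
    (hvtc : Continuous ↿vt) (hvxc : Continuous ↿vx)
    (hpde : ∀ t : ℝ, ∀ x ∈ Set.Icc (0:ℝ) 1,
      ω * vt t x - a x * vx t x - b x * v t x = f t x) :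
    ∀ t : ℝ, ∀ x ∈ Set.Icc (0:ℝ) 1,
      v t x - Real.exp (∫ η in x..(0:ℝ), b η / a η) * v (t + ω * ∫ η in (0:ℝ)..x, (a η)⁻¹) 0
        = -∫ ξ in (0:ℝ)..x,
            (Real.exp (∫ η in x..ξ, b η / a η) / a ξ) * f (t + ω * ∫ η in ξ..x, (a η)⁻¹) ξ := by
  -- extend a and b to all of ℝ
  set aa : ℝ → ℝ := fun y => a (Set.projIcc (0:ℝ) 1 zero_le_one y) with haa_def
  set bb : ℝ → ℝ := fun y => b (Set.projIcc (0:ℝ) 1 zero_le_one y) with hbb_def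
  have hproj : Continuous fun y : ℝ => ((Set.projIcc (0:ℝ) 1 zero_le_one y : Set.Icc (0:ℝ) 1) : ℝ) :=
    continuous_subtype_val.comp continuous_projIcc
  have haac : Continuous aa := ha.comp_continuous hproj fun y => (Set.projIcc (0:ℝ) 1 zero_le_one y).2
  have hbbc : Continuous bb := hb.comp_continuous hproj fun y => (Set.projIcc (0:ℝ) 1 zero_le_one y).2
  have haapos : ∀ y, 0 < aa y := fun y => hapos _ (Set.projIcc (0:ℝ) 1 zero_le_one y).2
  have haane : ∀ y, aa y ≠ 0 := fun y => (haapos y).ne'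
  have haeq : ∀ y ∈ Set.Icc (0:ℝ) 1, aa y = a y := fun y hy => by
    simp only [haa_def]; rw [Set.projIcc_of_mem zero_le_one hy]
  have hbeq : ∀ y ∈ Set.Icc (0:ℝ) 1, bb y = b y := fun y hy => by
    simp only [hbb_def]; rw [Set.projIcc_of_mem zero_le_one hy]
  intro t x hx
  -- the functions along the characteristic
  set u : ℝ → ℝ := fun ξ => t + ω * ∫ η in ξ..x, (aa η)⁻¹ with hu_def
  set B : ℝ → ℝ := fun ξ => ∫ η in x..ξ, bb η / aa η with hB_def
  set g : ℝ → ℝ := fun ξ => Real.exp (B ξ) * v (u ξ) ξ with hg_def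
  have hba_cont : Continuous fun η => bb η / aa η := hbbc.div haac haane
  have hainv_cont : Continuous fun η => (aa η)⁻¹ := haac.inv₀ haane
  have hB' : ∀ ξ, HasDerivAt B (bb ξ / aa ξ) ξ := fun ξ =>
    intervalIntegral.integral_hasDerivAt_right (hba_cont.intervalIntegrable _ _)
      (hba_cont.stronglyMeasurableAtFilter _ _) hba_cont.continuousAt
  have hIA : ∀ ξ, HasDerivAt (fun s => ∫ η in s..x, (aa η)⁻¹) (-(aa ξ)⁻¹) ξ := by
    intro ξ
    have h1 : HasDerivAt (fun s => ∫ η in x..s, (aa η)⁻¹) ((aa ξ)⁻¹) ξ :=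
      intervalIntegral.integral_hasDerivAt_right (hainv_cont.intervalIntegrable _ _)
        (hainv_cont.stronglyMeasurableAtFilter _ _) hainv_cont.continuousAt
    have h2 := h1.neg
    have : (fun s => ∫ η in s..x, (aa η)⁻¹) = fun s => -∫ η in x..s, (aa η)⁻¹ := by
      funext s; rw [intervalIntegral.integral_symm]
    rw [this]
    exact h2
  have hu' : ∀ ξ, HasDerivAt u (ω * -(aa ξ)⁻¹) ξ := fun ξ =>
    (((hIA ξ).const_mul ω).const_add t)
  have hBcont : Continuous B := continuous_iff_continuousAt.mpr fun ξ => (hB' ξ).continuousAt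
  have hucont : Continuous u := continuous_iff_continuousAt.mpr fun ξ => (hu' ξ).continuousAt
  -- derivative of the composition
  have hcomp : ∀ ξ, HasDerivAt (fun s => v (u s) s)
      (vt (u ξ) ξ * (ω * -(aa ξ)⁻¹) + vx (u ξ) ξ) ξ := by
    intro ξ
    have hc : HasDerivAt (fun s => ((u s, s) : ℝ × ℝ)) ((ω * -(aa ξ)⁻¹, 1) : ℝ × ℝ) ξ :=
      (hu' ξ).prodMk (hasDerivAt_id ξ)
    have hF := hasFDerivAt_of_partials v vt vx hvt hvx hvtc hvxc (u ξ, ξ)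
    have h3 : HasDerivAt (fun s => (↿v) (u s, s))
        ((vt (u ξ) ξ • ContinuousLinearMap.fst ℝ ℝ ℝ +
          vx (u ξ) ξ • ContinuousLinearMap.snd ℝ ℝ ℝ) ((ω * -(aa ξ)⁻¹, 1) : ℝ × ℝ)) ξ :=
      HasFDerivAt.comp_hasDerivAt (f := fun s => ((u s, s) : ℝ × ℝ)) ξ hF hc
    have heq : ((vt (u ξ) ξ • ContinuousLinearMap.fst ℝ ℝ ℝ +
        vx (u ξ) ξ • ContinuousLinearMap.snd ℝ ℝ ℝ) ((ω * -(aa ξ)⁻¹, 1) : ℝ × ℝ))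
        = vt (u ξ) ξ * (ω * -(aa ξ)⁻¹) + vx (u ξ) ξ := by
      simp
    rw [heq] at h3
    exact h3
  have hg' : ∀ ξ, HasDerivAt g
      (Real.exp (B ξ) * (bb ξ / aa ξ) * v (u ξ) ξ +
        Real.exp (B ξ) * (vt (u ξ) ξ * (ω * -(aa ξ)⁻¹) + vx (u ξ) ξ)) ξ := fun ξ =>
    ((hB' ξ).exp).mul (hcomp ξ)
  -- identify the derivative with the integrand on [0,1]
  set G : ℝ → ℝ := fun ξ => -(Real.exp (B ξ) / aa ξ * f (u ξ) ξ) with hG_def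
  have hGcont : Continuous G := by
    have : Continuous fun ξ => f (u ξ) ξ := hf.comp (hucont.prodMk continuous_id)
    exact (((Real.continuous_exp.comp hBcont).div haac haane).mul this).neg
  have hg'eq : ∀ ξ ∈ Set.Icc (0:ℝ) 1, HasDerivAt g (G ξ) ξ := by
    intro ξ hξ
    have hpd := hpde (u ξ) ξ hξ
    rw [← haeq ξ hξ, ← hbeq ξ hξ] at hpd
    have : G ξ = Real.exp (B ξ) * (bb ξ / aa ξ) * v (u ξ) ξ +
        Real.exp (B ξ) * (vt (u ξ) ξ * (ω * -(aa ξ)⁻¹) + vx (u ξ) ξ) := by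
      rw [hG_def]
      simp only
      rw [← hpd]
      field_simp [haane ξ]
      ring
    rw [this]
    exact hg' ξ
  -- FTC on [0, x]
  have hsub : Set.uIcc (0:ℝ) x ⊆ Set.Icc 0 1 :=
    Set.uIcc_subset_Icc (Set.left_mem_Icc.mpr zero_le_one) hx
  have hftc : ∫ ξ in (0:ℝ)..x, G ξ = g x - g 0 :=
    intervalIntegral.integral_eq_sub_of_hasDerivAt
      (fun ξ hξ => hg'eq ξ (hsub hξ)) (hGcont.intervalIntegrable _ _)
  -- evaluate endpoints
  have hgx : g x = v t x := by
    simp [hg_def, hB_def, hu_def, intervalIntegral.integral_same]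
  have hg0 : g 0 = Real.exp (∫ η in x..(0:ℝ), bb η / aa η) *
      v (t + ω * ∫ η in (0:ℝ)..x, (aa η)⁻¹) 0 := rfl
  -- convert the extended integrals back to a and b
  have hIcc : ∀ ξ ∈ Set.Icc (0:ℝ) 1, (∫ η in x..ξ, bb η / aa η) = ∫ η in x..ξ, b η / a η := by
    intro ξ hξ
    refine intervalIntegral.integral_congr fun η hη => ?_
    have hη' : η ∈ Set.Icc (0:ℝ) 1 := Set.uIcc_subset_Icc hx hξ hη
    rw [haeq η hη', hbeq η hη']
  have hIcc2 : ∀ ξ ∈ Set.Icc (0:ℝ) 1, (∫ η in ξ..x, (aa η)⁻¹) = ∫ η in ξ..x, (a η)⁻¹ := by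
    intro ξ hξ
    refine intervalIntegral.integral_congr fun η hη => ?_
    have hη' : η ∈ Set.Icc (0:ℝ) 1 := Set.uIcc_subset_Icc hξ hx hη
    rw [haeq η hη']
  have h01 : (0:ℝ) ∈ Set.Icc (0:ℝ) 1 := Set.left_mem_Icc.mpr zero_le_one
  have hrhs : (∫ ξ in (0:ℝ)..x, G ξ) =
      -∫ ξ in (0:ℝ)..x,
        (Real.exp (∫ η in x..ξ, b η / a η) / a ξ) * f (t + ω * ∫ η in ξ..x, (a η)⁻¹) ξ := by
    rw [← intervalIntegral.integral_neg]
    refine intervalIntegral.integral_congr fun ξ hξ => ?_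
    have hξ' : ξ ∈ Set.Icc (0:ℝ) 1 := hsub hξ
    simp only [hG_def, hB_def, hu_def]
    rw [hIcc ξ hξ', hIcc2 ξ hξ', haeq ξ hξ']
  have hlhs0 : Real.exp (∫ η in x..(0:ℝ), b η / a η) * v (t + ω * ∫ η in (0:ℝ)..x, (a η)⁻¹) 0
      = g 0 := by
    rw [hg0, hIcc 0 h01]
    have : (∫ η in (0:ℝ)..x, (aa η)⁻¹) = ∫ η in (0:ℝ)..x, (a η)⁻¹ := hIcc2 0 h01
    rw [this]
  rw [hlhs0, ← hgx, ← hftc, hrhs]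
end
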